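/- Let X ∈ 𝕊^n be a real symmetric n×n matrix with eigendecomposition X = Σ_{i=1}^n λ_i v_i v_iᵀ, λ_1 ≥ … ≥ λ_n. If Σ_{i: λ_i > 0} λ_i ≥ 1, then the Euclidean projection of X onto the spectrahedron 𝒮_n equals Σ_{i=1}^n max{0, λ_i − λ} v_i v_iᵀ, where λ ∈ ℝ is the unique solution of Σ_{i=1}^n max{0, λ_i − λ} = 1. Moreover, if there exists r ∈ {1, …, n − 1} with Σ_{i=1}^r λ_i ≥ 1 + r·λ_{r+1}, then this projection has rank at most r. -/

import Mathlib

/- Common definitions: Frobenius norm and inner product, singular values in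
non-increasing order, trace (nuclear) norm, multiplicity of the top singular
value, Euclidean projection onto the trace-norm ball, the spectrahedron and its
projection, sorted eigenvalues of symmetric matrices, best rank-`r`
approximations, and the singular-value soft-thresholding (prox) operator. -/

open scoped BigOperators
open Matrix MeasureTheory ProbabilityTheory

attribute [local instance] Matrix.normedAddCommGroup Matrix.normedSpace

noncomputable section

/-- Frobenius norm of a real matrix. -/
def frobNorm {m n : ℕ} (X : Matrix (Fin m) (Fin n) ℝ) : ℝ :=
  Real.sqrt (∑ i, ∑ j, (X i j) ^ 2)

/-- Frobenius inner product of two real matrices. -/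
def frobInner {m n : ℕ} (A B : Matrix (Fin m) (Fin n) ℝ) : ℝ :=
  ∑ i, ∑ j, A i j * B i j

/-- The continuous linear functional `H ↦ ⟨G, H⟩` (Frobenius inner product);
`HasFDerivAt f (frobCLM G) X` says that `G` is the gradient of `f` at `X`. -/
def frobCLM {m n : ℕ} (G : Matrix (Fin m) (Fin n) ℝ) :
    Matrix (Fin m) (Fin n) ℝ →L[ℝ] ℝ :=
  LinearMap.toContinuousLinearMap
    { toFun := fun H => frobInner G H
      map_add' := fun x y => by
        simp [frobInner, Matrix.add_apply, mul_add, Finset.sum_add_distrib]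
      map_smul' := fun c x => by
        simp [frobInner, Matrix.smul_apply, smul_eq_mul, Finset.mul_sum, mul_left_comm] }

/-- The non-increasing (descending) rearrangement of a finite tuple of reals. -/
def sortedDesc {N : ℕ} (f : Fin N → ℝ) : Fin N → ℝ :=
  fun i => f (Tuple.sort f i.rev)

/-- The singular values of a real `m × n` matrix in non-increasing order
(the square roots of the eigenvalues of `Xᵀ * X`), padded with zeros so that
there are `n` of them. -/
def svalsFin {m n : ℕ} (X : Matrix (Fin m) (Fin n) ℝ) : Fin n → ℝ :=
  sortedDesc (fun i => Real.sqrt ((show (Xᵀ * X).IsHermitian by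
    simpa using Matrix.isHermitian_conjTranspose_mul_self X).eigenvalues i))

/-- `svalI X i` is the `(i+1)`-th largest singular value of `X` (i.e. `0`-indexed:
`svalI X 0 = σ₁(X)`), interpreted as `0` when the index is out of range. -/
def svalI {m n : ℕ} (X : Matrix (Fin m) (Fin n) ℝ) (i : ℕ) : ℝ :=
  if h : i < n then svalsFin X ⟨i, h⟩ else 0

/-- The trace norm (nuclear norm): the sum of the singular values. -/
def traceNorm {m n : ℕ} (X : Matrix (Fin m) (Fin n) ℝ) : ℝ :=
  ∑ i, svalsFin X i

/-- `#σ₁(X)`: the multiplicity of the largest singular value of `X`. -/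
def multTop {m n : ℕ} (X : Matrix (Fin m) (Fin n) ℝ) : ℕ :=
  Nat.card {i : Fin n // svalsFin X i = svalI X 0}

/-- `P` is the Euclidean (Frobenius) projection of `X` onto the trace-norm ball
of radius `τ`. -/
def IsTraceBallProj {m n : ℕ} (τ : ℝ) (X P : Matrix (Fin m) (Fin n) ℝ) : Prop :=
  traceNorm P ≤ τ ∧ ∀ Z, traceNorm Z ≤ τ → frobNorm (X - P) ≤ frobNorm (X - Z)

/-- The Euclidean projection onto the trace-norm ball of radius `τ`. -/
def projTraceBall {m n : ℕ} (τ : ℝ) (X : Matrix (Fin m) (Fin n) ℝ) :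
    Matrix (Fin m) (Fin n) ℝ :=
  open scoped Classical in
  if h : ∃ P, IsTraceBallProj τ X P then h.choose else 0

/-- `Y` is a best rank-`r` approximation of `X` in Frobenius norm. -/
def IsBestRankApprox {m n : ℕ} (r : ℕ) (X Y : Matrix (Fin m) (Fin n) ℝ) : Prop :=
  Y.rank ≤ r ∧ ∀ Z : Matrix (Fin m) (Fin n) ℝ, Z.rank ≤ r → frobNorm (X - Y) ≤ frobNorm (X - Z)

/-- The spectrahedron: positive semidefinite matrices of unit trace. -/
def SpectraSet (n : ℕ) : Set (Matrix (Fin n) (Fin n) ℝ) :=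
  {X | X.PosSemidef ∧ X.trace = 1}

/-- `P` is the Euclidean (Frobenius) projection of `X` onto the spectrahedron. -/
def IsSpectraProj {n : ℕ} (X P : Matrix (Fin n) (Fin n) ℝ) : Prop :=
  P ∈ SpectraSet n ∧ ∀ Z ∈ SpectraSet n, frobNorm (X - P) ≤ frobNorm (X - Z)

/-- The Euclidean projection onto the spectrahedron. -/
def projSpectra {n : ℕ} (X : Matrix (Fin n) (Fin n) ℝ) : Matrix (Fin n) (Fin n) ℝ :=
  open scoped Classical in
  if h : ∃ P, IsSpectraProj X P then h.choose else 0

/-- `evalI X i` is the `(i+1)`-th largest eigenvalue of the symmetric matrix `X`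
(`0`-indexed: `evalI X 0 = λ₁(X)`, `evalI X (n-1) = λ_n(X)`); junk value `0` if
`X` is not symmetric or the index is out of range. -/
def evalI {n : ℕ} (X : Matrix (Fin n) (Fin n) ℝ) (i : ℕ) : ℝ :=
  open scoped Classical in
  if h : i < n then
    (if hX : X.IsHermitian then sortedDesc hX.eigenvalues ⟨i, h⟩ else 0)
  else 0

/-- The multiplicity of the smallest eigenvalue of a symmetric matrix. -/
def multMinEig {n : ℕ} (X : Matrix (Fin n) (Fin n) ℝ) : ℕ :=
  Nat.card {i : Fin n // evalI X i = evalI X (n - 1)}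

/-- `Y` is the value at `X` of the singular-value soft-thresholding operator
`𝒯_η`, characterized as the proximal mapping of `η‖·‖_*`:
the (unique) minimizer of `Z ↦ ½‖X − Z‖_F² + η‖Z‖_*`. -/
def IsSVT {m n : ℕ} (η : ℝ) (X Y : Matrix (Fin m) (Fin n) ℝ) : Prop :=
  ∀ Z : Matrix (Fin m) (Fin n) ℝ,
    frobNorm (X - Y) ^ 2 / 2 + η * traceNorm Y ≤ frobNorm (X - Z) ^ 2 / 2 + η * traceNorm Z

/-- The singular-value soft-thresholding operator `𝒯_η`. -/
def softThresh {m n : ℕ} (η : ℝ) (X : Matrix (Fin m) (Fin n) ℝ) :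
    Matrix (Fin m) (Fin n) ℝ :=
  open scoped Classical in
  if h : ∃ Y, IsSVT η X Y then h.choose else 0

instance {m n : ℕ} : MeasurableSpace (Matrix (Fin m) (Fin n) ℝ) :=
  inferInstanceAs (MeasurableSpace (Fin m → Fin n → ℝ))

end

/-!
Write `c i = max 0 (lam i - l)` and `P = ∑ c i • v i v iᵀ`. The residual is
`X - P = ∑ min (lam i) l • v i v iᵀ`, so `⟨X - P, P⟩ = ∑ min (lam i) l * c i = l ∑ c i = l`
(complementary slackness), while for `Z` in the spectrahedron the numbers `v iᵀ Z v i` are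
nonnegative and sum to `tr Z = 1`, so `⟨X - P, Z⟩ ≤ l`. Hence `⟨X - P, Z - P⟩ ≤ 0`, the obtuse-angle
criterion, which makes `P` the unique nearest point. The threshold is unique because
`t ↦ ∑ max 0 (lam i - t)` is strictly decreasing where it is positive, and the rank hypothesis
forces `lam r ≤ l`, so only the first `r` coefficients can be nonzero.
-/

section Frobenius

variable {m n : ℕ}

lemma frobInner_comm (A B : Matrix (Fin m) (Fin n) ℝ) : frobInner A B = frobInner B A := by
  simp only [frobInner, mul_comm]

lemma frobInner_sub_left (A B C : Matrix (Fin m) (Fin n) ℝ) :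
    frobInner (A - B) C = frobInner A C - frobInner B C := by
  simp only [frobInner, Matrix.sub_apply, sub_mul, Finset.sum_sub_distrib]

lemma frobInner_sub_right (A B C : Matrix (Fin m) (Fin n) ℝ) :
    frobInner A (B - C) = frobInner A B - frobInner A C := by
  rw [frobInner_comm, frobInner_sub_left, frobInner_comm B, frobInner_comm C]

lemma frobInner_self_nonneg (A : Matrix (Fin m) (Fin n) ℝ) : 0 ≤ frobInner A A :=
  Finset.sum_nonneg fun _ _ => Finset.sum_nonneg fun _ _ => mul_self_nonneg _

lemma frobNorm_nonneg (A : Matrix (Fin m) (Fin n) ℝ) : 0 ≤ frobNorm A :=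
  Real.sqrt_nonneg _

lemma frobNorm_sq (A : Matrix (Fin m) (Fin n) ℝ) : frobNorm A ^ 2 = frobInner A A := by
  simp only [frobNorm, frobInner, ← sq]
  exact Real.sq_sqrt (Finset.sum_nonneg fun _ _ => Finset.sum_nonneg fun _ _ => sq_nonneg _)

lemma eq_zero_of_frobInner_self_nonpos {A : Matrix (Fin m) (Fin n) ℝ} (h : frobInner A A ≤ 0) :
    A = 0 := by
  have hsq : ∑ i, ∑ j, A i j ^ 2 = 0 := by
    simpa only [frobInner, sq] using le_antisymm h (frobInner_self_nonneg A)
  ext i j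
  have hrow := (Finset.sum_eq_zero_iff_of_nonneg fun _ _ =>
    Finset.sum_nonneg fun _ _ => sq_nonneg _).mp hsq i (Finset.mem_univ _)
  exact pow_eq_zero_iff two_ne_zero |>.mp
    ((Finset.sum_eq_zero_iff_of_nonneg fun _ _ => sq_nonneg _).mp hrow j (Finset.mem_univ _))

lemma frobInner_sub_sub (A B : Matrix (Fin m) (Fin n) ℝ) :
    frobInner (A - B) (A - B) = frobInner A A - 2 * frobInner A B + frobInner B B := by
  rw [frobInner_sub_left, frobInner_sub_right, frobInner_sub_right, frobInner_comm B A]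
  ring

lemma frobNorm_sub_sq (X P Z : Matrix (Fin m) (Fin n) ℝ) :
    frobNorm (X - Z) ^ 2
      = frobNorm (X - P) ^ 2 - 2 * frobInner (X - P) (Z - P) + frobInner (Z - P) (Z - P) := by
  rw [frobNorm_sq, frobNorm_sq, show X - Z = (X - P) - (Z - P) by abel, frobInner_sub_sub]

variable {X P Z : Matrix (Fin m) (Fin n) ℝ}

lemma frobNorm_sub_le_of_frobInner_nonpos (h : frobInner (X - P) (Z - P) ≤ 0) :
    frobNorm (X - P) ≤ frobNorm (X - Z) := by
  refine (sq_le_sq₀ (frobNorm_nonneg _) (frobNorm_nonneg _)).mp ?_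
  linarith [frobNorm_sub_sq X P Z, frobInner_self_nonneg (Z - P)]

lemma eq_of_frobInner_nonpos_of_frobNorm_sub_le (h : frobInner (X - P) (Z - P) ≤ 0)
    (hZ : frobNorm (X - Z) ≤ frobNorm (X - P)) : Z = P := by
  have hsq := pow_le_pow_left₀ (frobNorm_nonneg _) hZ 2
  refine sub_eq_zero.mp (eq_zero_of_frobInner_self_nonpos ?_)
  linarith [frobNorm_sub_sq X P Z]

end Frobenius

namespace Matrix

variable {K m n : Type*} [Field K] [Fintype n]

lemma rank_add_le (A B : Matrix m n K) : (A + B).rank ≤ A.rank + B.rank := by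
  rw [rank, rank, rank, mulVecLin_add]
  exact (Submodule.finrank_mono (LinearMap.range_add_le _ _)).trans
    (Submodule.finrank_add_le_finrank_add_finrank _ _)

lemma rank_sum_le {ι : Type*} (s : Finset ι) (A : ι → Matrix m n K) :
    (∑ i ∈ s, A i).rank ≤ ∑ i ∈ s, (A i).rank :=
  Finset.le_sum_of_subadditive (fun B : Matrix m n K => B.rank) rank_zero.le rank_add_le s A

end Matrix

noncomputable section RankOneSum

variable {ι : Type*} [Fintype ι] {n : ℕ} (v : ι → Fin n → ℝ)

def rankOneSum (a : ι → ℝ) : Matrix (Fin n) (Fin n) ℝ :=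
  ∑ k, a k • vecMulVec (v k) (v k)

lemma rankOneSum_sub (a b : ι → ℝ) :
    rankOneSum v a - rankOneSum v b = rankOneSum v (a - b) := by
  simp only [rankOneSum, ← Finset.sum_sub_distrib, Pi.sub_apply, sub_smul]

lemma rankOneSum_mulVec (a : ι → ℝ) (x : Fin n → ℝ) :
    rankOneSum v a *ᵥ x = ∑ k, (a k * (v k ⬝ᵥ x)) • v k := by
  simp only [rankOneSum, sum_mulVec, smul_mulVec, vecMulVec_mulVec, op_smul_eq_smul, smul_smul]

lemma frobInner_rankOneSum (a : ι → ℝ) (B : Matrix (Fin n) (Fin n) ℝ) :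
    frobInner (rankOneSum v a) B = ∑ k, a k * (v k ⬝ᵥ (B *ᵥ v k)) := by
  simp only [rankOneSum, frobInner, Matrix.sum_apply, Matrix.smul_apply, vecMulVec_apply,
    smul_eq_mul, dotProduct, mulVec, Finset.sum_mul, Finset.mul_sum]
  conv_rhs => rw [Finset.sum_comm]
  refine Finset.sum_congr rfl fun i _ => ?_
  rw [Finset.sum_comm]
  exact Finset.sum_congr rfl fun j _ => Finset.sum_congr rfl fun k _ => by ring

lemma posSemidef_rankOneSum {a : ι → ℝ} (ha : ∀ k, 0 ≤ a k) : (rankOneSum v a).PosSemidef :=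
  posSemidef_sum _ fun k _ => (posSemidef_vecMulVec_self_star (v k)).smul (ha k)

lemma rank_rankOneSum_le (a : ι → ℝ) :
    (rankOneSum v a).rank ≤ (Finset.univ.filter fun k => a k ≠ 0).card := by
  classical
  rw [Finset.card_filter]
  refine (rank_sum_le _ _).trans (Finset.sum_le_sum fun k _ => ?_)
  split_ifs with hk
  · rw [← smul_vecMulVec]
    exact rank_vecMulVec_le _ _
  · rw [not_not.mp hk, zero_smul, rank_zero]

end RankOneSum

section Orthonormal

variable {ι : Type*} [Fintype ι] [DecidableEq ι] {n : ℕ} {v : ι → Fin n → ℝ}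

lemma rankOneSum_mulVec_of_orthonormal
    (hv : ∀ i j, ∑ k, v i k * v j k = if i = j then (1 : ℝ) else 0) (a : ι → ℝ) (k : ι) :
    rankOneSum v a *ᵥ v k = a k • v k := by
  have hvk : ∀ j, v j ⬝ᵥ v k = if j = k then 1 else 0 := fun j => hv j k
  simp [rankOneSum_mulVec, hvk]

lemma frobInner_rankOneSum_rankOneSum
    (hv : ∀ i j, ∑ k, v i k * v j k = if i = j then (1 : ℝ) else 0) (a b : ι → ℝ) :
    frobInner (rankOneSum v a) (rankOneSum v b) = ∑ k, a k * b k := by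
  have hvk : ∀ k, v k ⬝ᵥ v k = 1 := fun k => (hv k k).trans (if_pos rfl)
  simp [frobInner_rankOneSum, rankOneSum_mulVec_of_orthonormal hv, hvk]

lemma trace_rankOneSum
    (hv : ∀ i j, ∑ k, v i k * v j k = if i = j then (1 : ℝ) else 0) (a : ι → ℝ) :
    (rankOneSum v a).trace = ∑ k, a k := by
  have hvk : ∀ k, v k ⬝ᵥ v k = 1 := fun k => (hv k k).trans (if_pos rfl)
  simp [rankOneSum, trace_sum, trace_vecMulVec, hvk]

end Orthonormal

lemma sum_dotProduct_mulVec_eq_trace {n : ℕ} {v : Fin n → Fin n → ℝ}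
    (hv : ∀ i j, ∑ k, v i k * v j k = if i = j then (1 : ℝ) else 0)
    (B : Matrix (Fin n) (Fin n) ℝ) :
    ∑ k, v k ⬝ᵥ (B *ᵥ v k) = B.trace := by
  have hV : of v * (of v)ᵀ = 1 := by
    ext i j
    simpa [mul_apply, one_apply] using hv i j
  calc ∑ k, v k ⬝ᵥ (B *ᵥ v k) = (of v * B * (of v)ᵀ).trace := by
        simp only [trace, diag, mul_apply, transpose_apply, of_apply, dotProduct, mulVec,
          Finset.mul_sum, Finset.sum_mul]
        refine Finset.sum_congr rfl fun k _ => ?_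
        rw [Finset.sum_comm]
        exact Finset.sum_congr rfl fun _ _ => Finset.sum_congr rfl fun _ _ => by ring
    _ = ((of v)ᵀ * of v * B).trace := trace_mul_cycle _ _ _
    _ = B.trace := by rw [mul_eq_one_comm.mp hV, one_mul]

section WaterFilling

variable {ι : Type*} [Fintype ι] (lam : ι → ℝ)

lemma sub_max_zero_sub (a b : ℝ) : a - max 0 (a - b) = min a b := by
  rcases le_total a b with h | h
  · rw [max_eq_left (by linarith), min_eq_left h, sub_zero]
  · rw [max_eq_right (by linarith), min_eq_right h]
    ring

lemma sum_max_sub_lt_of_lt {s t : ℝ} (hst : s < t) (ht : 0 < ∑ i, max 0 (lam i - t)) :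
    ∑ i, max 0 (lam i - t) < ∑ i, max 0 (lam i - s) := by
  obtain ⟨i, -, hi⟩ := Finset.exists_lt_of_sum_lt (f := fun _ => (0 : ℝ)) (by simpa using ht)
  have hti : t < lam i := by
    rcases lt_max_iff.mp hi with h | h
    · exact absurd h (lt_irrefl 0)
    · linarith
  refine Finset.sum_lt_sum (fun j _ => max_le_max_left 0 (by linarith)) ⟨i, Finset.mem_univ _, ?_⟩
  rw [max_eq_right (by linarith)]
  exact lt_max_of_lt_right (by linarith)

lemma eq_of_sum_max_sub_eq {s t c : ℝ} (hc : 0 < c) (hs : ∑ i, max 0 (lam i - s) = c)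
    (ht : ∑ i, max 0 (lam i - t) = c) : s = t := by
  by_contra hne
  rcases lt_or_gt_of_ne hne with h | h
  · linarith [sum_max_sub_lt_of_lt lam h (ht ▸ hc)]
  · linarith [sum_max_sub_lt_of_lt lam h (hs ▸ hc)]

lemma le_of_sum_max_sub_eq {l μ c : ℝ} {S : Finset ι} (hS : S.Nonempty)
    (hl : ∑ i, max 0 (lam i - l) = c) (h : c + S.card * μ ≤ ∑ i ∈ S, lam i) : μ ≤ l := by
  have hle : ∑ i ∈ S, (lam i - l) ≤ c :=
    hl ▸ (Finset.sum_le_sum fun i _ => le_max_right _ _).trans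
      (Finset.sum_le_univ_sum_of_nonneg fun _ => le_max_left _ _)
  rw [Finset.sum_sub_distrib, Finset.sum_const, nsmul_eq_mul] at hle
  have hcard : (0 : ℝ) < S.card := by exact_mod_cast hS.card_pos
  nlinarith

end WaterFilling

section Spectrahedron

variable {n : ℕ} {v : Fin n → Fin n → ℝ} {lam : Fin n → ℝ} {l : ℝ}

lemma frobInner_sub_rankOneSum_max_sub_nonpos
    (hv : ∀ i j, ∑ k, v i k * v j k = if i = j then (1 : ℝ) else 0)
    (hl : ∑ i, max 0 (lam i - l) = 1) {Z : Matrix (Fin n) (Fin n) ℝ} (hZ : Z ∈ SpectraSet n) :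
    frobInner (rankOneSum v lam - rankOneSum v fun i => max 0 (lam i - l))
      (Z - rankOneSum v fun i => max 0 (lam i - l)) ≤ 0 := by
  have hmin : (lam - fun i => max 0 (lam i - l)) = fun i => min (lam i) l :=
    funext fun i => sub_max_zero_sub (lam i) l
  have hslack : ∑ i, min (lam i) l * max 0 (lam i - l) = l := by
    calc ∑ i, min (lam i) l * max 0 (lam i - l) = ∑ i, l * max 0 (lam i - l) :=
          Finset.sum_congr rfl fun i _ => by
            rcases le_total (lam i) l with h | h
            · rw [max_eq_left (by linarith), mul_zero, mul_zero]
            · rw [min_eq_right h]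
      _ = l := by rw [← Finset.mul_sum, hl, mul_one]
  have hZl : ∑ i, min (lam i) l * (v i ⬝ᵥ (Z *ᵥ v i)) ≤ l := by
    calc ∑ i, min (lam i) l * (v i ⬝ᵥ (Z *ᵥ v i))
        ≤ ∑ i, l * (v i ⬝ᵥ (Z *ᵥ v i)) := Finset.sum_le_sum fun i _ =>
          mul_le_mul_of_nonneg_right (min_le_right _ _) (by
            simpa using hZ.1.dotProduct_mulVec_nonneg (v i))
      _ = l := by rw [← Finset.mul_sum, sum_dotProduct_mulVec_eq_trace hv, hZ.2, mul_one]
  rw [rankOneSum_sub, hmin, frobInner_sub_right, frobInner_rankOneSum_rankOneSum hv,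
    frobInner_rankOneSum, hslack]
  linarith

lemma rank_rankOneSum_max_sub_le (hdesc : Antitone lam) {r : ℕ} (hrn : r < n)
    (hr : lam ⟨r, hrn⟩ ≤ l) : (rankOneSum v fun i => max 0 (lam i - l)).rank ≤ r := by
  refine (rank_rankOneSum_le v _).trans ?_
  calc (Finset.univ.filter fun i => max 0 (lam i - l) ≠ 0).card
      ≤ (Finset.Iio (⟨r, hrn⟩ : Fin n)).card := Finset.card_le_card fun i hi => by
        simp only [Finset.mem_filter, Finset.mem_univ, true_and] at hi
        by_contra hir
        exact hi (max_eq_left (by linarith [hdesc (not_lt.mp (Finset.mem_Iio.not.mp hir))]))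
    _ = r := Fin.card_Iio _

end Spectrahedron

theorem stmt14_general {n : ℕ} (X : Matrix (Fin n) (Fin n) ℝ)
    (v : Fin n → (Fin n → ℝ)) (lam : Fin n → ℝ)
    (hv : ∀ i j, ∑ k, v i k * v j k = if i = j then (1 : ℝ) else 0)
    (hdesc : Antitone lam)
    (hX : X = ∑ i, lam i • Matrix.vecMulVec (v i) (v i))
    (l : ℝ) (hl : ∑ i, max 0 (lam i - l) = 1) :
    (∀ l' : ℝ, ∑ i, max 0 (lam i - l') = 1 → l' = l) ∧
    IsSpectraProj X (∑ i, max 0 (lam i - l) • Matrix.vecMulVec (v i) (v i)) ∧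
    (∀ Q, IsSpectraProj X Q →
      Q = ∑ i, max 0 (lam i - l) • Matrix.vecMulVec (v i) (v i)) ∧
    (∀ r : ℕ, 1 ≤ r → ∀ hrn : r < n,
      1 + (r : ℝ) * lam ⟨r, hrn⟩ ≤ ∑ i : Fin n, (if (i : ℕ) < r then lam i else 0) →
      (∑ i, max 0 (lam i - l) • Matrix.vecMulVec (v i) (v i)).rank ≤ r) := by
  subst hX
  have hP : (rankOneSum v fun i => max 0 (lam i - l)) ∈ SpectraSet n :=
    ⟨posSemidef_rankOneSum v fun _ => le_max_left _ _, by rw [trace_rankOneSum hv, hl]⟩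
  have hopt := fun Z (hZ : Z ∈ SpectraSet n) => frobInner_sub_rankOneSum_max_sub_nonpos hv hl hZ
  refine ⟨fun l' hl' => eq_of_sum_max_sub_eq lam one_pos hl' hl,
    ⟨hP, fun Z hZ => frobNorm_sub_le_of_frobInner_nonpos (hopt Z hZ)⟩,
    fun Q hQ => eq_of_frobInner_nonpos_of_frobNorm_sub_le (hopt Q hQ.1) (hQ.2 _ hP),
    fun r hr hrn hsum => rank_rankOneSum_max_sub_le hdesc hrn ?_⟩
  have hIio : Finset.Iio (⟨r, hrn⟩ : Fin n) = Finset.univ.filter fun i : Fin n => (i : ℕ) < r := by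
    ext i
    simp [Fin.lt_def]
  refine le_of_sum_max_sub_eq lam (S := Finset.Iio ⟨r, hrn⟩)
    ⟨⟨0, by omega⟩, Finset.mem_Iio.mpr (Fin.mk_lt_mk.mpr hr)⟩ hl ?_
  rwa [Fin.card_Iio, hIio, Finset.sum_filter]

/-- projection onto the spectrahedron.
If `X = ∑ λᵢ vᵢ vᵢᵀ` is an eigendecomposition of the symmetric matrix `X`
(orthonormal `v`, `λ` non-increasing) with `∑_{λᵢ>0} λᵢ ≥ 1`, then for the unique
`l` with `∑ max 0 (λᵢ − l) = 1`, the matrix `∑ max 0 (λᵢ − l) vᵢ vᵢᵀ` is the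
(unique) Euclidean projection of `X` onto the spectrahedron; moreover if
`∑_{i≤r} λᵢ ≥ 1 + r λ_{r+1}` for some `1 ≤ r ≤ n−1`, this projection has rank at
most `r`. -/
theorem stmt14 {n : ℕ} (X : Matrix (Fin n) (Fin n) ℝ)
    (v : Fin n → (Fin n → ℝ)) (lam : Fin n → ℝ)
    (hv : ∀ i j, ∑ k, v i k * v j k = if i = j then (1 : ℝ) else 0)
    (hdesc : Antitone lam)
    (hX : X = ∑ i, lam i • Matrix.vecMulVec (v i) (v i))
    (hsum : 1 ≤ ∑ i, max 0 (lam i))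
    (l : ℝ) (hl : ∑ i, max 0 (lam i - l) = 1) :
    (∀ l' : ℝ, ∑ i, max 0 (lam i - l') = 1 → l' = l) ∧
    IsSpectraProj X (∑ i, max 0 (lam i - l) • Matrix.vecMulVec (v i) (v i)) ∧
    (∀ Q, IsSpectraProj X Q →
      Q = ∑ i, max 0 (lam i - l) • Matrix.vecMulVec (v i) (v i)) ∧
    (∀ r : ℕ, 1 ≤ r → ∀ hrn : r < n,
      1 + (r : ℝ) * lam ⟨r, hrn⟩ ≤ ∑ i : Fin n, (if (i : ℕ) < r then lam i else 0) →
      (∑ i, max 0 (lam i - l) • Matrix.vecMulVec (v i) (v i)).rank ≤ r) :=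
  stmt14_general X v lam hv hdesc hX l hl
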